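/- Let n ≥ 2. Then the following identity of polynomials in one variable t holds: ∑_{w ∈ S_n, w⁻¹(1) ≤ w⁻¹(n)} t^{2ℓ(w)} = (∑_{k=1}^{n−1} k·t^{2(k−1)}) · ∏_{ℓ=1}^{n−3} (1 + t² + … + t^{2ℓ}), where the product over ℓ is empty (hence equal to 1) when n ≤ 3. -/
import Mathlib


open Polynomial

/-- Number of inversions of a permutation of {1,…,n} (encoded on `Fin n`):
`ℓ(w) = |{(a,b) : a < b, w(a) > w(b)}|`. -/
def invCount {n : ℕ} (w : Equiv.Perm (Fin n)) : ℕ :=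
  (Finset.univ.filter (fun p : Fin n × Fin n => p.1 < p.2 ∧ w p.2 < w p.1)).card

open Finset Equiv

namespace Stmt3

variable {m : ℕ}

lemma invCount_eq_sum {k : ℕ} (w : Perm (Fin k)) :
    invCount w = ∑ a : Fin k, ∑ b : Fin k, if a < b ∧ w b < w a then 1 else 0 := by
  rw [invCount, Finset.card_filter, Fintype.sum_prod_type]

lemma card_lt (p : Fin (m+1)) :
    (∑ i : Fin m, if (i : ℕ) < (p : ℕ) then 1 else 0) = (p : ℕ) := by
  rw [Fin.sum_univ_eq_sum_range (fun i => if i < (p:ℕ) then 1 else 0) m]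
  rw [Finset.sum_boole]
  have : (Finset.range m).filter (fun i => i < (p:ℕ)) = Finset.range p := by
    ext j
    simp only [Finset.mem_filter, Finset.mem_range]
    omega
  simp [this]

lemma card_ge (p : Fin (m+1)) :
    (∑ i : Fin m, if (p : ℕ) ≤ (i : ℕ) then 1 else 0) = m - (p : ℕ) := by
  rw [Fin.sum_univ_eq_sum_range (fun i => if (p:ℕ) ≤ i then 1 else 0) m]
  rw [Finset.sum_boole]
  have : (Finset.range m).filter (fun i => (p:ℕ) ≤ i) = Finset.Ico (p:ℕ) m := by
    ext j
    simp only [Finset.mem_filter, Finset.mem_range, Finset.mem_Ico]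
    omega
  simp [this]


/-- Insert value `v` at position `p`. -/
def ins (p v : Fin (m+1)) (τ : Perm (Fin m)) : Perm (Fin (m+1)) :=
  (finSuccEquiv' p).trans ((τ.optionCongr).trans (finSuccEquiv' v).symm)

@[simp] lemma ins_apply_self (p v : Fin (m+1)) (τ : Perm (Fin m)) : ins p v τ p = v := by
  simp [ins, finSuccEquiv'_at]

@[simp] lemma ins_apply_succAbove (p v : Fin (m+1)) (τ : Perm (Fin m)) (i : Fin m) :
    ins p v τ (p.succAbove i) = v.succAbove (τ i) := by
  simp [ins, finSuccEquiv'_succAbove]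

@[simp] lemma ins_inv_self (p v : Fin (m+1)) (τ : Perm (Fin m)) : (ins p v τ)⁻¹ v = p := by
  rw [Equiv.Perm.inv_eq_iff_eq, ins_apply_self]

/-- The insertion bijection. -/
def insEquiv (v : Fin (m+1)) : Fin (m+1) × Perm (Fin m) ≃ Perm (Fin (m+1)) where
  toFun x := ins x.1 v x.2
  invFun σ := (σ⁻¹ v,
    Equiv.removeNone ((finSuccEquiv' (σ⁻¹ v)).symm.trans (σ.trans (finSuccEquiv' v))))
  left_inv := by
    rintro ⟨p, τ⟩
    have h1 : (ins p v τ)⁻¹ v = p := ins_inv_self p v τ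
    refine Prod.ext h1 ?_
    have h2 : (finSuccEquiv' ((ins p v τ)⁻¹ v)).symm.trans ((ins p v τ).trans (finSuccEquiv' v))
        = τ.optionCongr := by
      rw [h1]
      ext x
      cases x with
      | none => simp [finSuccEquiv'_symm_none, finSuccEquiv'_at]
      | some i => simp [finSuccEquiv'_symm_some, finSuccEquiv'_succAbove]
    simp only [h2, Equiv.removeNone_optionCongr]
  right_inv := by
    intro σ
    set p := σ⁻¹ v with hp
    set e := (finSuccEquiv' p).symm.trans (σ.trans (finSuccEquiv' v)) with he
    have hnone : e none = none := by
      simp [he, finSuccEquiv'_symm_none, hp, finSuccEquiv'_at]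
    have hsome : ∀ i, e (some i) = some (Equiv.removeNone e i) := by
      intro i
      have : e (some i) ≠ none := by
        intro h; exact Option.some_ne_none i (e.injective (h.trans hnone.symm))
      obtain ⟨y, hy⟩ := Option.ne_none_iff_exists'.mp this
      exact (Equiv.removeNone_some e ⟨y, hy⟩).symm
    ext j
    rcases eq_or_ne j p with rfl | hj
    · simp [hp]
    · obtain ⟨i, rfl⟩ := Fin.exists_succAbove_eq hj
      have := hsome i
      simp only [he, Equiv.trans_apply, finSuccEquiv'_symm_some] at this
      have := congrArg (finSuccEquiv' v).symm this
      rw [Equiv.symm_apply_apply, finSuccEquiv'_symm_some] at this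
      rw [ins_apply_succAbove, ← this]


lemma invCount_expand (w : Perm (Fin (m+1))) (p : Fin (m+1)) :
    invCount w = (∑ j : Fin m, if p < p.succAbove j ∧ w (p.succAbove j) < w p then 1 else 0)
      + (∑ i : Fin m, if p.succAbove i < p ∧ w p < w (p.succAbove i) then 1 else 0)
      + ∑ i : Fin m, ∑ j : Fin m,
          if p.succAbove i < p.succAbove j ∧ w (p.succAbove j) < w (p.succAbove i) then 1
          else 0 := by
  rw [invCount_eq_sum]
  rw [Fin.sum_univ_succAbove (fun a => ∑ b : Fin (m+1), if a < b ∧ w b < w a then 1 else 0) p]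
  rw [Fin.sum_univ_succAbove (fun b => if p < b ∧ w b < w p then 1 else 0) p]
  have h : ∀ i : Fin m,
      (∑ b : Fin (m+1), if p.succAbove i < b ∧ w b < w (p.succAbove i) then 1 else 0)
      = (if p.succAbove i < p ∧ w p < w (p.succAbove i) then 1 else 0)
        + ∑ j : Fin m, if p.succAbove i < p.succAbove j ∧ w (p.succAbove j) < w (p.succAbove i)
            then 1 else 0 :=
    fun i => Fin.sum_univ_succAbove
      (fun b => if p.succAbove i < b ∧ w b < w (p.succAbove i) then 1 else 0) p
  rw [Finset.sum_congr rfl fun i _ => h i, Finset.sum_add_distrib]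
  simp only [lt_irrefl, false_and, if_false, zero_add]
  ring

lemma invCount_ins_last (p : Fin (m+1)) (τ : Perm (Fin m)) :
    invCount (ins p (Fin.last m) τ) = invCount τ + (m - (p : ℕ)) := by
  rw [invCount_expand (ins p (Fin.last m) τ) p]
  have e1 : (∑ j : Fin m, if p < p.succAbove j ∧
      (ins p (Fin.last m) τ) (p.succAbove j) < (ins p (Fin.last m) τ) p then 1 else 0)
      = m - (p : ℕ) := by
    rw [← card_ge p]
    refine Finset.sum_congr rfl fun j _ => ?_
    rw [ins_apply_succAbove, ins_apply_self, Fin.succAbove_last_apply]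
    have hlt : Fin.castSucc (τ j) < Fin.last m := Fin.castSucc_lt_last _
    have h2 : p < p.succAbove j ↔ (p : ℕ) ≤ (j : ℕ) := by
      rw [Fin.lt_succAbove_iff_le_castSucc]; exact ⟨fun h => h, fun h => h⟩
    simp [hlt, h2]
  have e2 : (∑ i : Fin m, if p.succAbove i < p ∧
      (ins p (Fin.last m) τ) p < (ins p (Fin.last m) τ) (p.succAbove i) then 1 else 0) = 0 := by
    refine Finset.sum_eq_zero fun i _ => ?_
    rw [ins_apply_succAbove, ins_apply_self, Fin.succAbove_last_apply]
    have : ¬ Fin.last m < Fin.castSucc (τ i) := Fin.not_lt.mpr (Fin.le_last _)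
    simp [this]
  have e3 : (∑ i : Fin m, ∑ j : Fin m, if p.succAbove i < p.succAbove j ∧
      (ins p (Fin.last m) τ) (p.succAbove j) < (ins p (Fin.last m) τ) (p.succAbove i) then 1
      else 0) = invCount τ := by
    rw [invCount_eq_sum]
    refine Finset.sum_congr rfl fun i _ => Finset.sum_congr rfl fun j _ => ?_
    rw [ins_apply_succAbove, ins_apply_succAbove, Fin.succAbove_last_apply,
      Fin.succAbove_last_apply]
    simp [Fin.succAbove_lt_succAbove_iff, Fin.castSucc_lt_castSucc_iff]
  rw [e1, e2, e3]
  omega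

lemma invCount_ins_zero (p : Fin (m+1)) (τ : Perm (Fin m)) :
    invCount (ins p 0 τ) = invCount τ + (p : ℕ) := by
  rw [invCount_expand (ins p 0 τ) p]
  have e1 : (∑ j : Fin m, if p < p.succAbove j ∧
      (ins p 0 τ) (p.succAbove j) < (ins p 0 τ) p then 1 else 0) = 0 := by
    refine Finset.sum_eq_zero fun j _ => ?_
    rw [ins_apply_succAbove, ins_apply_self, Fin.succAbove_zero_apply]
    simp [Fin.not_lt_zero]
  have e2 : (∑ i : Fin m, if p.succAbove i < p ∧
      (ins p 0 τ) p < (ins p 0 τ) (p.succAbove i) then 1 else 0) = (p : ℕ) := by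
    rw [← card_lt p]
    refine Finset.sum_congr rfl fun i _ => ?_
    rw [ins_apply_succAbove, ins_apply_self, Fin.succAbove_zero_apply]
    have h1 : (0 : Fin (m+1)) < Fin.succ (τ i) := Fin.succ_pos _
    have h2 : p.succAbove i < p ↔ (i : ℕ) < (p : ℕ) := by
      rw [Fin.succAbove_lt_iff_castSucc_lt]; exact ⟨fun h => h, fun h => h⟩
    simp [h1, h2]
  have e3 : (∑ i : Fin m, ∑ j : Fin m, if p.succAbove i < p.succAbove j ∧
      (ins p 0 τ) (p.succAbove j) < (ins p 0 τ) (p.succAbove i) then 1 else 0) = invCount τ := by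
    rw [invCount_eq_sum]
    refine Finset.sum_congr rfl fun i _ => Finset.sum_congr rfl fun j _ => ?_
    rw [ins_apply_succAbove, ins_apply_succAbove, Fin.succAbove_zero_apply,
      Fin.succAbove_zero_apply]
    simp [Fin.succAbove_lt_succAbove_iff, Fin.succ_lt_succ_iff]
  rw [e1, e2, e3]
  omega



lemma sum_perm_succ (m : ℕ) :
    ∑ σ : Perm (Fin (m+1)), (X : Polynomial ℤ) ^ (2 * invCount σ)
      = (∑ k ∈ Finset.range (m+1), (X : Polynomial ℤ) ^ (2*k))
        * ∑ τ : Perm (Fin m), (X : Polynomial ℤ) ^ (2 * invCount τ) := by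
  rw [← Equiv.sum_comp (insEquiv (Fin.last m))
    (fun σ : Perm (Fin (m+1)) => (X : Polynomial ℤ) ^ (2 * invCount σ)), Fintype.sum_prod_type]
  rw [Finset.sum_mul_sum]
  have key : ∀ (x : Fin (m+1)) (τ : Perm (Fin m)),
      (X : Polynomial ℤ) ^ (2 * invCount ((insEquiv (Fin.last m)) (x, τ)))
        = X ^ (2*(m-(x:ℕ))) * X ^ (2*invCount τ) := by
    intro x τ
    rw [show ((insEquiv (Fin.last m)) (x, τ)) = ins x (Fin.last m) τ from rfl,
      invCount_ins_last, ← pow_add]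
    congr 1
    omega
  simp only [key]
  rw [Fin.sum_univ_eq_sum_range
    (fun j => ∑ τ : Perm (Fin m), (X : Polynomial ℤ) ^ (2*(m-j)) * X ^ (2*invCount τ)) (m+1)]
  exact Finset.sum_range_reflect
    (fun j => ∑ τ : Perm (Fin m), (X : Polynomial ℤ) ^ (2*j) * X ^ (2*invCount τ)) (m+1)

lemma qfact (m : ℕ) :
    ∑ σ : Perm (Fin m), (X : Polynomial ℤ) ^ (2 * invCount σ)
      = ∏ l ∈ Finset.Icc 1 (m-1), ∑ k ∈ Finset.range (l+1), (X : Polynomial ℤ) ^ (2*k) := by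
  induction m with
  | zero =>
      have h : ∀ σ : Perm (Fin 0), invCount σ = 0 := fun σ => by simp [invCount]
      simp [h, Finset.Icc_eq_empty_of_lt (by norm_num : (0:ℕ) < 1)]
  | succ m ih =>
      rw [sum_perm_succ, ih]
      cases m with
      | zero => simp
      | succ s =>
          rw [show (s+1+1-1) = s+1 from rfl, show (s+1-1) = s from rfl,
            Finset.prod_Icc_succ_top (by omega : 1 ≤ s+1), mul_comm]


lemma countlem (m : ℕ) :
    ∑ b ∈ Finset.range (m+2), ∑ a ∈ Finset.range (m+1),
      (if a < b then (X : Polynomial ℤ)^(2*(a + (m+1-b))) else 0)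
    = ∑ s ∈ Finset.range (m+1), C ((s:ℤ)+1) * X^(2*s) := by
  induction m with
  | zero =>
      simp [Finset.sum_range_succ]
  | succ m ih =>
      rw [Finset.sum_range_succ]
      have htop : (∑ a ∈ Finset.range (m+1+1),
          if a < m+1+1 then (X : Polynomial ℤ)^(2*(a+(m+1+1-(m+1+1)))) else 0)
          = ∑ a ∈ Finset.range (m+2), (X : Polynomial ℤ)^(2*a) := by
        refine Finset.sum_congr rfl fun a ha => ?_
        rw [Finset.mem_range] at ha
        rw [if_pos (by omega)]
        congr 1
        omega
      have hmain : (∑ b ∈ Finset.range (m+1+1), ∑ a ∈ Finset.range (m+1+1),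
          if a < b then (X : Polynomial ℤ)^(2*(a+(m+1+1-b))) else 0)
          = X^2 * ∑ b ∈ Finset.range (m+2), ∑ a ∈ Finset.range (m+1),
              (if a < b then (X : Polynomial ℤ)^(2*(a + (m+1-b))) else 0) := by
        rw [Finset.mul_sum]
        refine Finset.sum_congr rfl fun b hb => ?_
        rw [Finset.mem_range] at hb
        rw [Finset.sum_range_succ]
        have h0 : (if m+1 < b then (X : Polynomial ℤ)^(2*((m+1)+(m+1+1-b))) else 0) = 0 :=
          if_neg (by omega)
        rw [h0, add_zero, Finset.mul_sum]
        refine Finset.sum_congr rfl fun a ha => ?_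
        rw [Finset.mem_range] at ha
        by_cases hab : a < b
        · rw [if_pos hab, if_pos hab, ← pow_add]
          congr 1
          omega
        · rw [if_neg hab, if_neg hab, mul_zero]
      rw [hmain, htop, ih, Finset.mul_sum]
      have h1 : ∀ s : ℕ, (X : Polynomial ℤ)^2 * (C ((s:ℤ)+1) * X^(2*s))
          = C ((s:ℤ)+1) * X^(2*(s+1)) := by
        intro s
        ring
      rw [Finset.sum_congr rfl fun s _ => h1 s]
      have h2 : ∀ s : ℕ, C ((s:ℤ)+1) * (X : Polynomial ℤ)^(2*s)
          = C (s:ℤ) * X^(2*s) + X^(2*s) := by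
        intro s
        rw [map_add, map_one, add_mul, one_mul]
      rw [Finset.sum_congr rfl fun s (_ : s ∈ Finset.range (m+1+1)) => h2 s,
        Finset.sum_add_distrib]
      congr 1
      rw [Finset.sum_range_succ' (fun t => C (t:ℤ) * (X : Polynomial ℤ)^(2*t)) (m+1)]
      push_cast
      simp


lemma icc_bridge (m : ℕ) :
    (∑ k ∈ Finset.Icc 1 (m+1), C ((k:ℤ)) * (X : Polynomial ℤ) ^ (2 * (k - 1)))
      = ∑ s ∈ Finset.range (m+1), C ((s:ℤ)+1) * X^(2*s) := by
  rw [← Finset.Ico_add_one_right_eq_Icc, Finset.sum_Ico_eq_sum_range]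
  refine Finset.sum_congr (by congr 1) fun s _ => ?_
  have h1 : 1 + s - 1 = s := by omega
  rw [h1]
  push_cast
  ring_nf

end Stmt3

/-- For n ≥ 2,
∑_{w ∈ S_n, w⁻¹(1) ≤ w⁻¹(n)} t^{2ℓ(w)}
  = (∑_{k=1}^{n−1} k·t^{2(k−1)}) · ∏_{ℓ=1}^{n−3} (1 + t² + … + t^{2ℓ}),
the product being empty when n ≤ 3. Permutations are encoded on `Fin n`, position
j ∈ {1,…,n} corresponding to `⟨j-1,_⟩ : Fin n`; polynomials live in `ℤ[t]`. -/
theorem stmt_3 (n : ℕ) (hn : 2 ≤ n) :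
    ∑ w ∈ Finset.univ.filter (fun w : Equiv.Perm (Fin n) =>
        (w⁻¹ ⟨0, by omega⟩ : Fin n) ≤ (w⁻¹ ⟨n - 1, by omega⟩ : Fin n)),
      (X : Polynomial ℤ) ^ (2 * invCount w) =
    (∑ k ∈ Finset.Icc 1 (n - 1), C ((k : ℤ)) * X ^ (2 * (k - 1)))
      * ∏ l ∈ Finset.Icc 1 (n - 3), ∑ m ∈ Finset.range (l + 1), (X : Polynomial ℤ) ^ (2 * m) := by
  obtain ⟨m, rfl⟩ : ∃ m, n = m + 2 := ⟨n - 2, by omega⟩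
  rw [Finset.sum_filter]
  rw [← Equiv.sum_comp (Stmt3.insEquiv (Fin.last (m+1)))
    (fun w : Equiv.Perm (Fin (m+2)) =>
      if (w⁻¹ ⟨0, by omega⟩ : Fin (m+2)) ≤ (w⁻¹ ⟨m + 2 - 1, by omega⟩ : Fin (m+2))
      then (X : Polynomial ℤ) ^ (2 * invCount w) else 0), Fintype.sum_prod_type]
  have hinner : ∀ b : Fin (m+2),
      (∑ σ' : Equiv.Perm (Fin (m+1)),
        (fun w : Equiv.Perm (Fin (m+2)) =>
          if (w⁻¹ ⟨0, by omega⟩ : Fin (m+2)) ≤ (w⁻¹ ⟨m + 2 - 1, by omega⟩ : Fin (m+2))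
          then (X : Polynomial ℤ) ^ (2 * invCount w) else 0)
          ((Stmt3.insEquiv (Fin.last (m+1))) (b, σ')))
      = ∑ a : Fin (m+1), ∑ τ : Equiv.Perm (Fin m),
          (if (a : ℕ) < (b : ℕ)
            then (X : Polynomial ℤ) ^ (2*((a:ℕ) + (m+1-(b:ℕ)))) else 0)
            * (X : Polynomial ℤ) ^ (2 * invCount τ) := by
    intro b
    rw [← Equiv.sum_comp (Stmt3.insEquiv (0 : Fin (m+1)))
      (fun σ' : Equiv.Perm (Fin (m+1)) =>
        (fun w : Equiv.Perm (Fin (m+2)) =>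
          if (w⁻¹ ⟨0, by omega⟩ : Fin (m+2)) ≤ (w⁻¹ ⟨m + 2 - 1, by omega⟩ : Fin (m+2))
          then (X : Polynomial ℤ) ^ (2 * invCount w) else 0)
          ((Stmt3.insEquiv (Fin.last (m+1))) (b, σ'))), Fintype.sum_prod_type]
    refine Finset.sum_congr rfl fun a _ => Finset.sum_congr rfl fun τ _ => ?_
    set w : Equiv.Perm (Fin (m+2)) := Stmt3.ins b (Fin.last (m+1)) (Stmt3.ins a 0 τ) with hwdef
    show (if (w⁻¹ ⟨0, by omega⟩ : Fin (m+2)) ≤ (w⁻¹ ⟨m + 2 - 1, by omega⟩ : Fin (m+2))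
        then (X : Polynomial ℤ) ^ (2 * invCount w) else 0) = _
    have hlast : (⟨m + 2 - 1, by omega⟩ : Fin (m+2)) = Fin.last (m+1) := rfl
    have hzero : (⟨0, by omega⟩ : Fin (m+2)) = 0 := rfl
    have hwlast : w⁻¹ (Fin.last (m+1)) = b := Stmt3.ins_inv_self _ _ _
    have hw0 : w⁻¹ 0 = b.succAbove a := by
      rw [Equiv.Perm.inv_eq_iff_eq, hwdef, Stmt3.ins_apply_succAbove, Stmt3.ins_apply_self,
        Fin.succAbove_last_apply]
      rfl
    have hcond : (w⁻¹ ⟨0, by omega⟩ : Fin (m+2)) ≤ w⁻¹ ⟨m + 2 - 1, by omega⟩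
        ↔ (a : ℕ) < (b : ℕ) := by
      rw [hlast, hzero, hwlast, hw0]
      by_cases h : Fin.castSucc a < b
      · rw [Fin.succAbove_of_castSucc_lt _ _ h]
        simp only [Fin.le_def, Fin.lt_def, Fin.coe_castSucc] at *
        omega
      · rw [Fin.succAbove_of_le_castSucc _ _ (Fin.not_lt.mp h)]
        simp only [Fin.le_def, Fin.lt_def, Fin.coe_castSucc, Fin.val_succ] at *
        omega
    have hinv : invCount w = invCount τ + ((a:ℕ) + (m+1-(b:ℕ))) := by
      rw [hwdef, Stmt3.invCount_ins_last, Stmt3.invCount_ins_zero]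
      omega
    by_cases h : (a : ℕ) < (b : ℕ)
    · rw [if_pos (hcond.mpr h), if_pos h, hinv, ← pow_add]
      congr 1
      omega
    · rw [if_neg (fun hc => h (hcond.mp hc)), if_neg h, zero_mul]
  rw [Finset.sum_congr rfl fun b _ => hinner b]
  have hsplit : ∀ b : Fin (m+2),
      (∑ a : Fin (m+1), ∑ τ : Equiv.Perm (Fin m),
        (if (a : ℕ) < (b : ℕ)
          then (X : Polynomial ℤ) ^ (2*((a:ℕ) + (m+1-(b:ℕ)))) else 0)
          * (X : Polynomial ℤ) ^ (2 * invCount τ))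
      = (∑ a : Fin (m+1), if (a : ℕ) < (b : ℕ)
          then (X : Polynomial ℤ) ^ (2*((a:ℕ) + (m+1-(b:ℕ)))) else 0)
        * ∑ τ : Equiv.Perm (Fin m), (X : Polynomial ℤ) ^ (2 * invCount τ) := by
    intro b
    rw [Finset.sum_mul]
    exact Finset.sum_congr rfl fun a _ => by rw [Finset.mul_sum]
  rw [Finset.sum_congr rfl fun b _ => hsplit b, ← Finset.sum_mul, Stmt3.qfact]
  have hcount : (∑ b : Fin (m+2), ∑ a : Fin (m+1),
      if (a : ℕ) < (b : ℕ) then (X : Polynomial ℤ) ^ (2*((a:ℕ) + (m+1-(b:ℕ)))) else 0)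
      = ∑ k ∈ Finset.Icc 1 (m + 2 - 1), C ((k : ℤ)) * X ^ (2 * (k - 1)) := by
    have h1 : ∀ b : Fin (m+2), (∑ a : Fin (m+1),
        if (a : ℕ) < (b : ℕ) then (X : Polynomial ℤ) ^ (2*((a:ℕ) + (m+1-(b:ℕ)))) else 0)
        = ∑ a ∈ Finset.range (m+1),
            if a < (b:ℕ) then (X : Polynomial ℤ) ^ (2*(a + (m+1-(b:ℕ)))) else 0 :=
      fun b => Fin.sum_univ_eq_sum_range
        (fun a => if a < (b:ℕ) then (X : Polynomial ℤ) ^ (2*(a + (m+1-(b:ℕ)))) else 0) (m+1)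
    rw [Finset.sum_congr rfl fun b _ => h1 b]
    rw [Fin.sum_univ_eq_sum_range
      (fun b => ∑ a ∈ Finset.range (m+1),
        if a < b then (X : Polynomial ℤ) ^ (2*(a + (m+1-b))) else 0) (m+2)]
    rw [Stmt3.countlem m]
    exact (Stmt3.icc_bridge m).symm
  rw [hcount]
  rfl
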